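/- In any linear order of the 2n vertices of a perfect matching with n ≥ r^3 edges, there exist r matching edges forming an r-rainbow, an r-twist, or an r-necklace; in particular, a perfect matching with at least k^3 edges placed so that it contains a k-twist requires k pages. -/

import Mathlib

/-- Two edges `(a,b)` and `(c,d)` with `a ≺ b` and `c ≺ d` cross if
`a ≺ c ≺ b ≺ d` or `c ≺ a ≺ d ≺ b`. -/
def Cross {V : Type*} [LinearOrder V] (a b c d : V) : Prop :=
  (a < c ∧ c < b ∧ b < d) ∨ (c < a ∧ a < d ∧ d < b)

/-!
Peeling off the minimal elements of a finite set (they form an antichain) shows, by induction on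
`k`, that a transitive relation on more than `k * m` elements has a chain of length `k + 1` or an
antichain of size `m + 1`. Applied to the relation "edge `i` ends before edge `j` starts", a chain
is a necklace; otherwise some antichain has more than `(r - 1) ^ 2` pairwise overlapping edges
(`s i < t j`). Two distinct overlapping edges cross or are nested, so applying the dichotomy to the
crossing relation on this antichain, and then to the nesting relation on a large antichain of that
(an Erdős–Szekeres argument), gives `r` edges forming a twist or a rainbow. Finally, the edges of a
twist cross pairwise, so they lie on distinct pages.
-/

open Finset Function

section Chains

variable {α : Type*} (r : α → α → Prop)

theorem Fin.cons_rel_of_rel [IsTrans α r] {k : ℕ} {y : α} {f : Fin (k + 1) → α}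
    (hy : r y (f 0)) (hf : ∀ i j, i < j → r (f i) (f j)) :
    ∀ i j : Fin (k + 2), i < j →
      r ((Fin.cons y f : Fin (k + 2) → α) i) ((Fin.cons y f : Fin (k + 2) → α) j) := by
  intro i j hij
  induction j using Fin.cases with
  | zero => exact absurd hij (Fin.not_lt_zero i)
  | succ j =>
    induction i using Fin.cases with
    | zero =>
      rcases eq_or_ne j 0 with rfl | hj
      · exact hy
      · exact _root_.trans hy (hf 0 j (Fin.pos_iff_ne_zero.2 hj))
    | succ i => exact hf i j (Fin.succ_lt_succ_iff.1 hij)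

theorem Finset.exists_chain_or_antichain_of_mul_lt_card [IsTrans α r] {m : ℕ} :
    ∀ {k : ℕ} (s : Finset α), k * m < #s →
      (∃ f : Fin (k + 1) → α, (∀ i, f i ∈ s) ∧ ∀ i j, i < j → r (f i) (f j)) ∨
        ∃ u ⊆ s, m < #u ∧ IsAntichain r (u : Set α)
  | 0, s, h => by
    obtain ⟨x, hx⟩ := card_pos.1 (by simpa using h)
    exact Or.inl ⟨fun _ => x, fun _ => hx, fun i j hij => absurd hij (by omega)⟩
  | k + 1, s, h => by
    classical
    set M := s.filter fun x => ∀ y ∈ s, ¬r y x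
    by_cases hM : m < #M
    · refine Or.inr ⟨M, filter_subset _ _, hM, fun x hx y hy _ hxy => ?_⟩
      exact (mem_filter.1 (mem_coe.1 hy)).2 x (mem_filter.1 (mem_coe.1 hx)).1 hxy
    have hcard : k * m < #(s \ M) := by
      have hMs : M ⊆ s := filter_subset _ _
      have := card_sdiff_add_card_eq_card hMs
      rw [Nat.succ_mul] at h
      omega
    rcases exists_chain_or_antichain_of_mul_lt_card (s \ M) hcard with
      ⟨f, hfs, hf⟩ | ⟨u, hus, hu, hanti⟩
    · obtain ⟨hf0, hf0M⟩ := mem_sdiff.1 (hfs 0)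
      obtain ⟨y, hy, hyf⟩ : ∃ y ∈ s, r y (f 0) := by
        simpa [M, hf0] using hf0M
      refine Or.inl ⟨Fin.cons y f, fun i => ?_, Fin.cons_rel_of_rel r hyf hf⟩
      induction i using Fin.cases with
      | zero => exact hy
      | succ i => exact (mem_sdiff.1 (hfs i)).1
    · exact Or.inr ⟨u, hus.trans sdiff_subset, hu, hanti⟩

theorem Finset.exists_chain_or_chain_of_mul_lt_card (r₁ r₂ : α → α → Prop) [IsTrans α r₁]
    [IsTrans α r₂] (s : Finset α)
    (hcomp : ∀ x ∈ s, ∀ y ∈ s, x ≠ y → r₁ x y ∨ r₁ y x ∨ r₂ x y ∨ r₂ y x)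
    {k m : ℕ} (h : k * m < #s) :
    (∃ f : Fin (k + 1) → α, (∀ i, f i ∈ s) ∧ ∀ i j, i < j → r₁ (f i) (f j)) ∨
      ∃ f : Fin (m + 1) → α, (∀ i, f i ∈ s) ∧ ∀ i j, i < j → r₂ (f i) (f j) := by
  refine (exists_chain_or_antichain_of_mul_lt_card r₁ s h).imp id ?_
  rintro ⟨u, hus, hu, hanti₁⟩
  rcases exists_chain_or_antichain_of_mul_lt_card r₂ u (k := m) (m := 1) (by omega) with
    ⟨f, hfu, hf⟩ | ⟨v, hvu, hv, hanti₂⟩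
  · exact ⟨f, fun i => hus (hfu i), hf⟩
  obtain ⟨x, hx, y, hy, hxy⟩ := one_lt_card.1 hv
  have hxu := hvu hx
  have hyu := hvu hy
  rcases hcomp x (hus hxu) y (hus hyu) hxy with h | h | h | h
  · exact absurd h (hanti₁ hxu hyu hxy)
  · exact absurd h (hanti₁ hyu hxu hxy.symm)
  · exact absurd h (hanti₂ hx hy hxy)
  · exact absurd h (hanti₂ hy hx hxy.symm)

end Chains

section Matching

variable {ι V : Type*} [LinearOrder V] (s t : ι → V) {r : ℕ}

def IsRainbow (σ : Fin r → ι) : Prop :=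
  StrictMono (fun i => s (σ i)) ∧ StrictAnti (fun i => t (σ i))

def IsTwist (σ : Fin r → ι) : Prop :=
  StrictMono (fun i => s (σ i)) ∧ StrictMono (fun i => t (σ i)) ∧ ∀ i j, s (σ i) < t (σ j)

def IsNecklace (σ : Fin r → ι) : Prop :=
  ∀ i j, i < j → t (σ i) < s (σ j)

variable {s t}

theorem IsNecklace.strictMono {σ : Fin r → ι} (hσ : IsNecklace s t σ) (hst : ∀ i, s i < t i) :
    StrictMono (fun i => s (σ i)) :=
  fun i j hij => (hst (σ i)).trans (hσ i j hij)

theorem IsTwist.cross {σ : Fin r → ι} (hσ : IsTwist s t σ) {i j : Fin r} (hij : i < j) :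
    Cross (s (σ i)) (t (σ i)) (s (σ j)) (t (σ j)) :=
  Or.inl ⟨hσ.1 hij, hσ.2.2 j i, hσ.2.1 hij⟩

theorem IsTwist.injective_comp {P : Type*} {σ : Fin r → ι} (hσ : IsTwist s t σ) (pg : ι → P)
    (hpg : ∀ i j, pg i = pg j → ¬Cross (s i) (t i) (s j) (t j)) : Injective (pg ∘ σ) := by
  intro i j hij
  by_contra hne
  rcases lt_or_gt_of_ne hne with h | h
  · exact hpg _ _ hij (hσ.cross h)
  · exact hpg _ _ hij.symm (hσ.cross h)

theorem exists_isNecklace_or_overlapping [Fintype ι] (hst : ∀ i, s i < t i)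
    (hts : ∀ i j, i ≠ j → t i ≠ s j) {k m : ℕ} (h : k * m < Fintype.card ι) :
    (∃ σ : Fin (k + 1) → ι, IsNecklace s t σ) ∨
      ∃ C : Finset ι, m < #C ∧ ∀ i ∈ C, ∀ j ∈ C, s i < t j := by
  have : IsTrans ι fun i j => t i < s j := ⟨fun a b c hab hbc => hab.trans ((hst b).trans hbc)⟩
  rcases exists_chain_or_antichain_of_mul_lt_card (fun i j => t i < s j) univ h with
    ⟨σ, -, hσ⟩ | ⟨C, -, hC, hanti⟩
  · exact Or.inl ⟨σ, hσ⟩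
  refine Or.inr ⟨C, hC, fun i hi j hj => ?_⟩
  rcases eq_or_ne i j with rfl | hij
  · exact hst i
  · exact (not_lt.1 (hanti hj hi hij.symm)).lt_of_ne (hts j i hij.symm).symm

theorem exists_isTwist_or_isRainbow (hs : Injective s) (ht : Injective t) (C : Finset ι)
    (hC : ∀ i ∈ C, ∀ j ∈ C, s i < t j) {k : ℕ} (h : k * k < #C) :
    ∃ σ : Fin (k + 1) → ι, IsTwist s t σ ∨ IsRainbow s t σ := by
  have : IsTrans ι fun i j => s i < s j ∧ t i < t j :=
    ⟨fun _ _ _ hab hbc => ⟨hab.1.trans hbc.1, hab.2.trans hbc.2⟩⟩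
  have : IsTrans ι fun i j => s i < s j ∧ t j < t i :=
    ⟨fun _ _ _ hab hbc => ⟨hab.1.trans hbc.1, hbc.2.trans hab.2⟩⟩
  have hcomp : ∀ x ∈ C, ∀ y ∈ C, x ≠ y →
      (s x < s y ∧ t x < t y) ∨ (s y < s x ∧ t y < t x) ∨
        (s x < s y ∧ t y < t x) ∨ (s y < s x ∧ t x < t y) := by
    intro x _ y _ hxy
    rcases lt_or_gt_of_ne (hs.ne hxy) with hs' | hs' <;>
      rcases lt_or_gt_of_ne (ht.ne hxy) with ht' | ht' <;> simp [hs', ht']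
  rcases exists_chain_or_chain_of_mul_lt_card _ _ C hcomp h with ⟨σ, hσC, hσ⟩ | ⟨σ, -, hσ⟩
  · exact ⟨σ, Or.inl ⟨fun i j hij => (hσ i j hij).1, fun i j hij => (hσ i j hij).2,
      fun i j => hC _ (hσC i) _ (hσC j)⟩⟩
  · exact ⟨σ, Or.inr ⟨fun i j hij => (hσ i j hij).1, fun i j hij => (hσ i j hij).2⟩⟩

end Matching

theorem stmt_18_general {V P : Type*} [LinearOrder V] (r n : ℕ) (hn : r ^ 3 ≤ n)
    (s t : Fin n → V) (hst : ∀ i, s i < t i)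
    (hdisj : ∀ i j, i ≠ j → s i ≠ s j ∧ s i ≠ t j ∧ t i ≠ s j ∧ t i ≠ t j) :
    (∃ σ : Fin r → Fin n, Function.Injective σ ∧
      ((StrictMono (fun i => s (σ i)) ∧ StrictAnti (fun i => t (σ i))) ∨
       (StrictMono (fun i => s (σ i)) ∧ StrictMono (fun i => t (σ i)) ∧
         ∀ i j : Fin r, s (σ i) < t (σ j)) ∨
       (∀ i j : Fin r, i < j → t (σ i) < s (σ j)))) ∧
    (∀ σ : Fin r → Fin n, Function.Injective σ →
      (StrictMono (fun i => s (σ i)) ∧ StrictMono (fun i => t (σ i)) ∧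
        ∀ i j : Fin r, s (σ i) < t (σ j)) →
      ∀ pg : Fin n → P,
        (∀ i j, pg i = pg j → ¬Cross (s i) (t i) (s j) (t j)) →
        Function.Injective (pg ∘ σ)) := by
  refine ⟨?_, fun σ _ hσ pg hpg => IsTwist.injective_comp (s := s) (t := t) hσ pg hpg⟩
  obtain _ | k := r
  · exact ⟨Fin.elim0, fun i => i.elim0, Or.inr (Or.inr fun i => i.elim0)⟩
  have hs : Injective s := fun i j h => by_contra fun hij => (hdisj i j hij).1 h
  have ht : Injective t := fun i j h => by_contra fun hij => (hdisj i j hij).2.2.2 h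
  have hcard : k * k ^ 2 < Fintype.card (Fin n) := by
    rw [Fintype.card_fin, ← pow_succ']
    exact (Nat.pow_lt_pow_left k.lt_succ_self (by norm_num)).trans_le hn
  rcases exists_isNecklace_or_overlapping hst (fun i j hij => (hdisj i j hij).2.2.1) hcard with
    ⟨σ, hσ⟩ | ⟨C, hC, hover⟩
  · exact ⟨σ, (hσ.strictMono hst).injective.of_comp, Or.inr (Or.inr hσ)⟩
  obtain ⟨σ, hσ | hσ⟩ := exists_isTwist_or_isRainbow hs ht C hover (by rwa [sq] at hC)
  · exact ⟨σ, hσ.1.injective.of_comp, Or.inr (Or.inl hσ)⟩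
  · exact ⟨σ, hσ.1.injective.of_comp, Or.inl hσ⟩

/-- In any linear order of the `2n` vertices of a perfect matching with
`n ≥ r ^ 3` edges `(s i, t i)` (pairwise disjoint and covering all vertices),
there exist `r` matching edges forming an `r`-rainbow, an `r`-twist, or an
`r`-necklace; moreover, if `r` of the matching edges form an `r`-twist, then
in any valid page assignment (same-page edges do not cross) these `r` edges
receive pairwise distinct pages, so the matching requires `r` pages. -/
theorem stmt_18 {V P : Type*} [LinearOrder V] (r n : ℕ) (hn : r ^ 3 ≤ n)
    (s t : Fin n → V) (hst : ∀ i, s i < t i)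
    (hdisj : ∀ i j, i ≠ j → s i ≠ s j ∧ s i ≠ t j ∧ t i ≠ s j ∧ t i ≠ t j)
    (hperfect : ∀ v : V, ∃ i, v = s i ∨ v = t i) :
    (∃ σ : Fin r → Fin n, Function.Injective σ ∧
      ((StrictMono (fun i => s (σ i)) ∧ StrictAnti (fun i => t (σ i))) ∨
       (StrictMono (fun i => s (σ i)) ∧ StrictMono (fun i => t (σ i)) ∧
         ∀ i j : Fin r, s (σ i) < t (σ j)) ∨
       (∀ i j : Fin r, i < j → t (σ i) < s (σ j)))) ∧
    (∀ σ : Fin r → Fin n, Function.Injective σ →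
      (StrictMono (fun i => s (σ i)) ∧ StrictMono (fun i => t (σ i)) ∧
        ∀ i j : Fin r, s (σ i) < t (σ j)) →
      ∀ pg : Fin n → P,
        (∀ i j, pg i = pg j → ¬Cross (s i) (t i) (s j) (t j)) →
        Function.Injective (pg ∘ σ)) :=
  stmt_18_general r n hn s t hst hdisj
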